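/- Define S_0, S_1 : L²(𝕋) → L²(𝕋) by (S_0 f)(x) = f(2x) and (S_1 f)(x) = e_1(x) · f(2x); this pair is a representation of 𝒪_2 on L²(𝕋). Then for every k ≥ 1 and every α = (α_1, …, α_k) ∈ {0,1}^k, the range of the projection S_α S_α^* = S_{α_1}⋯S_{α_k}S_{α_k}^*⋯S_{α_1}^* equals the closed linear span of {e_n : n ∈ ℤ, n ≡ α_1 + 2α_2 + ⋯ + 2^{k−1}α_k (mod 2^k)}. -/

import Mathlib

open MeasureTheory ContinuousLinearMap AddCircle
open scoped InnerProductSpace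

variable {H : Type*} [NormedAddCommGroup H] [InnerProductSpace ℂ H] [CompleteSpace H]

/-- The word operator `S_α = S_{α 1} ⋯ S_{α k}` associated to a multi-index
`α ∈ {0,…,N-1}^k`. -/
noncomputable def Sw {N : ℕ} (S : Fin N → H →L[ℂ] H) {k : ℕ} (α : Fin k → Fin N) :
    H →L[ℂ] H :=
  (List.ofFn fun i => S (α i)).prod

/-- A family `S_0, …, S_{N-1}` of bounded operators is a representation of the Cuntz
algebra `𝒪_N` if `S_j^* S_k = δ_{jk} I` and `∑ j, S_j S_j^* = I`. -/
def CuntzRep {N : ℕ} (S : Fin N → H →L[ℂ] H) : Prop :=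
  (∀ j k : Fin N, adjoint (S j) ∘L S k = if j = k then 1 else 0) ∧
    ∑ j : Fin N, S j ∘L adjoint (S j) = 1

/-!
On the Fourier basis the two isometries act by `S_j e_n = e_{2n+j}`, hence
`S_α e_n = e_{2^k n + w}` with `w = α_1 + 2α_2 + ⋯ + 2^{k-1}α_k`. If an operator maps a Hilbert
basis injectively into itself, then `T T^*` fixes the basis vectors it hits and kills the
others. This gives both Cuntz relations, and shows that `S_α S_α^*` is the projection onto the
closed span of the `e_m` with `m ≡ w (mod 2^k)`.
-/

namespace HilbertBasis

variable {ι 𝕜 E : Type*} [RCLike 𝕜] [NormedAddCommGroup E] [InnerProductSpace 𝕜 E]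
  (b : HilbertBasis ι 𝕜 E)

theorem ext_inner {x y : E} (h : ∀ i, ⟪b i, x⟫_𝕜 = ⟪b i, y⟫_𝕜) : x = y :=
  b.repr.injective <| lp.ext <| funext fun i => by simp only [b.repr_apply_apply, h]

theorem continuousLinearMap_ext {T U : E →L[𝕜] E} (h : ∀ i, T (b i) = U (b i)) : T = U :=
  ContinuousLinearMap.ext_on (Submodule.dense_iff_topologicalClosure_eq_top.mpr b.dense_span)
    (Set.forall_mem_range.mpr h)

theorem range_eq_closure_span_image {P : E →L[𝕜] E} {s : Set ι}
    (hP : ∀ i, P (b i) = s.indicator b i) :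
    Set.range P = closure (Submodule.span 𝕜 (b '' s) : Set E) := by
  apply Set.Subset.antisymm
  · rintro _ ⟨x, rfl⟩
    refine isClosed_closure.mem_of_tendsto ((b.hasSum_repr x).mapL P)
      (Filter.Eventually.of_forall fun t => ?_)
    refine subset_closure (sum_mem fun i _ => ?_)
    rw [map_smul, hP]
    by_cases hi : i ∈ s
    · rw [Set.indicator_of_mem hi]
      exact Submodule.smul_mem _ _ (Submodule.subset_span ⟨i, hi, rfl⟩)
    · rw [Set.indicator_of_notMem hi, smul_zero]
      exact zero_mem _
  · have hfix : Submodule.span 𝕜 (b '' s) ≤ LinearMap.eqLocus (P : E →ₗ[𝕜] E) LinearMap.id := by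
      rw [Submodule.span_le]
      rintro _ ⟨i, hi, rfl⟩
      simp [hP, hi]
    intro x hx
    exact ⟨x, closure_minimal hfix (isClosed_eq P.continuous continuous_id) hx⟩

variable [CompleteSpace E] {b} {T : E →L[𝕜] E} {σ : ι → ι}

theorem adjoint_apply_map (hσ : σ.Injective) (hT : ∀ i, T (b i) = b (σ i)) (i : ι) :
    adjoint T (b (σ i)) = b i := by
  classical
  refine b.ext_inner fun p => ?_
  rw [adjoint_inner_right, hT]
  exact (orthonormal_iff_ite.mp (b.orthonormal.comp σ hσ) p i).trans
    (orthonormal_iff_ite.mp b.orthonormal p i).symm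

theorem adjoint_apply_of_notMem_range (hT : ∀ i, T (b i) = b (σ i)) {j : ι}
    (hj : j ∉ Set.range σ) : adjoint T (b j) = 0 := by
  refine b.ext_inner fun p => ?_
  rw [adjoint_inner_right, hT, inner_zero_right]
  exact b.orthonormal.inner_eq_zero fun h => hj ⟨p, h⟩

theorem comp_adjoint_apply (hσ : σ.Injective) (hT : ∀ i, T (b i) = b (σ i)) (j : ι) :
    (T ∘L adjoint T) (b j) = (Set.range σ).indicator b j := by
  by_cases hj : j ∈ Set.range σ
  · obtain ⟨i, rfl⟩ := hj
    rw [Set.indicator_of_mem (Set.mem_range_self i), comp_apply, adjoint_apply_map hσ hT, hT]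
  · rw [Set.indicator_of_notMem hj, comp_apply, adjoint_apply_of_notMem_range hT hj, map_zero]

end HilbertBasis

theorem Int.range_mul_add (M w : ℤ) : Set.range (fun n => M * n + w) = {m | m ≡ w [ZMOD M]} := by
  ext m
  simp only [Set.mem_range, Set.mem_ofPred, Int.modEq_iff_dvd]
  constructor
  · rintro ⟨n, rfl⟩
    exact ⟨-n, by ring⟩
  · rintro ⟨n, hn⟩
    exact ⟨-n, by linarith⟩

theorem Int.mul_add_injective {M : ℤ} (hM : M ≠ 0) (w : ℤ) : (fun n => M * n + w).Injective :=
  (add_left_injective w).comp (mul_right_injective₀ hM)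

theorem Fin.existsUnique_intCast_modEq {N : ℕ} [NeZero N] (n : ℤ) :
    ∃! j : Fin N, n ≡ j [ZMOD N] := by
  have hN : (0 : ℤ) < N := by exact_mod_cast Nat.pos_of_neZero N
  have h₀ := Int.emod_nonneg n hN.ne'
  have h₁ := Int.emod_lt_of_pos n hN
  refine ⟨⟨(n % N).toNat, by omega⟩, ?_, fun j hj => Fin.ext ?_⟩
  · show n ≡ (((n % N).toNat : ℕ) : ℤ) [ZMOD N]
    rw [Int.toNat_of_nonneg h₀]
    exact (Int.mod_modEq n N).symm
  · replace hj : n % N = (j : ℤ) % N := hj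
    rw [Int.emod_eq_of_lt (a := (j : ℤ)) (by positivity) (by exact_mod_cast j.isLt)] at hj
    change (j : ℕ) = (n % N).toNat
    omega

section Words

variable {E : Type*} [NormedAddCommGroup E] [InnerProductSpace ℂ E] {N : ℕ}
  (S : Fin N → E →L[ℂ] E)

theorem Sw_succ {k : ℕ} (α : Fin (k + 1) → Fin N) : Sw S α = S (α 0) ∘L Sw S (Fin.tail α) := by
  simp only [Sw, List.ofFn_succ, List.prod_cons]
  rfl

variable {S} (b : HilbertBasis ℤ ℂ E)

theorem Sw_apply_of_apply_basis (hS : ∀ j n, S j (b n) = b (N * n + j)) {k : ℕ}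
    (α : Fin k → Fin N) (n : ℤ) :
    Sw S α (b n) = b (N ^ k * n + ∑ i : Fin k, ((α i : ℕ) : ℤ) * (N : ℤ) ^ (i : ℕ)) := by
  induction k generalizing n with
  | zero => simp [Sw]
  | succ k ih =>
    rw [Sw_succ, comp_apply, ih, hS, Fin.sum_univ_succ]
    congr 1
    simp only [Fin.tail, Fin.val_succ, Fin.val_zero, pow_succ', pow_zero, mul_add,
      Finset.mul_sum, mul_left_comm (N : ℤ)]
    ring

theorem cuntzRep_of_apply_basis [CompleteSpace E] [NeZero N]
    (hS : ∀ j n, S j (b n) = b (N * n + j)) : CuntzRep S := by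
  have hN : (N : ℤ) ≠ 0 := by exact_mod_cast NeZero.ne N
  have hσ j := Int.mul_add_injective hN ((j : Fin N) : ℤ)
  constructor
  · intro j k
    refine b.continuousLinearMap_ext fun n => ?_
    rw [comp_apply, hS]
    split_ifs with hjk
    · subst hjk
      rw [HilbertBasis.adjoint_apply_map (hσ j) (hS j), one_apply_eq_self]
    · rw [zero_apply]
      refine HilbertBasis.adjoint_apply_of_notMem_range (hS j) fun h => hjk ?_
      rw [Int.range_mul_add] at h
      have hk : (N : ℤ) * n + k ≡ k [ZMOD N] := by simp [Int.ModEq]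
      exact (Fin.existsUnique_intCast_modEq _).unique h hk
  · refine b.continuousLinearMap_ext fun n => ?_
    obtain ⟨j₀, hj₀, huniq⟩ := Fin.existsUnique_intCast_modEq (N := N) n
    simp only [sum_apply, one_apply_eq_self,
      HilbertBasis.comp_adjoint_apply (hσ _) (hS _), Int.range_mul_add]
    rw [Finset.sum_eq_single j₀]
    · apply Set.indicator_of_mem
      exact hj₀
    · intro j _ hj
      apply Set.indicator_of_notMem
      exact fun h => hj (huniq j h)
    · exact fun h => (h (Finset.mem_univ _)).elim

end Words

section Fourier

variable {T : ℝ}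

theorem fourier_nsmul_apply (n : ℤ) (m : ℕ) (x : AddCircle T) :
    fourier n (m • x) = fourier (m * n) x := by
  rw [fourier_apply, fourier_apply, ← natCast_zsmul, smul_smul, mul_comm]

variable [Fact (0 < T)]

theorem fourierLp_comp_nsmul_ae_eq {m : ℕ} (hm : m ≠ 0) {p : ENNReal} [Fact (1 ≤ p)] (n : ℤ) :
    (fun x : AddCircle T => fourierLp p n (m • x)) =ᵐ[haarAddCircle] fourier (m * n) := by
  have hmp : MeasurePreserving (fun x : AddCircle T => m • x) haarAddCircle haarAddCircle := by
    simpa only [natCast_zsmul] using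
      Measure.measurePreserving_zsmul haarAddCircle (n := (m : ℤ)) (by exact_mod_cast hm)
  refine (hmp.quasiMeasurePreserving.ae_eq_comp (coeFn_fourierLp p n)).trans ?_
  exact Filter.Eventually.of_forall fun x => fourier_nsmul_apply n m x

theorem apply_fourierBasis_of_ae_eq
    (S : Fin 2 → Lp ℂ 2 (haarAddCircle : Measure (AddCircle T)) →L[ℂ]
      Lp ℂ 2 (haarAddCircle : Measure (AddCircle T)))
    (hform0 : ∀ g : Lp ℂ 2 (haarAddCircle : Measure (AddCircle T)),
      ⇑(S 0 g) =ᵐ[haarAddCircle] fun x => g (2 • x))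
    (hform1 : ∀ g : Lp ℂ 2 (haarAddCircle : Measure (AddCircle T)),
      ⇑(S 1 g) =ᵐ[haarAddCircle] fun x => fourier 1 x * g (2 • x))
    (j : Fin 2) (n : ℤ) : S j (fourierBasis n) = fourierBasis (2 * n + j) := by
  have hdouble := fourierLp_comp_nsmul_ae_eq (T := T) two_ne_zero (p := 2) n
  rw [coe_fourierBasis]
  apply Lp.ext
  refine .trans ?_ (coeFn_fourierLp 2 _).symm
  fin_cases j
  · refine (hform0 _).trans (hdouble.trans ?_)
    simp
  · refine (hform1 _).trans (hdouble.mono fun x hx => ?_)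
    simp only at hx ⊢
    rw [hx, ← fourier_add]
    congr 2
    push_cast
    ring

end Fourier

/-- For the representation of `𝒪_2` on `L²(𝕋)` given by `(S_0 f)(x) = f(2x)` and
`(S_1 f)(x) = e_1(x) f(2x)`, the range of the projection `S_α S_α^*` is the closed span
of the characters `e_n` with `n ≡ α_1 + 2α_2 + ⋯ + 2^{k-1}α_k (mod 2^k)`. -/
theorem stmt_19
    (S : Fin 2 →
      (Lp ℂ 2 (haarAddCircle : Measure UnitAddCircle) →L[ℂ]
        Lp ℂ 2 (haarAddCircle : Measure UnitAddCircle)))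
    (hform0 : ∀ g : Lp ℂ 2 (haarAddCircle : Measure UnitAddCircle),
      ⇑(S 0 g) =ᵐ[(haarAddCircle : Measure UnitAddCircle)] fun x => g (2 • x))
    (hform1 : ∀ g : Lp ℂ 2 (haarAddCircle : Measure UnitAddCircle),
      ⇑(S 1 g) =ᵐ[(haarAddCircle : Measure UnitAddCircle)]
        fun x => fourier 1 x * g (2 • x)) :
    CuntzRep S ∧
      ∀ k : ℕ, 1 ≤ k → ∀ α : Fin k → Fin 2,
        Set.range ⇑(Sw S α ∘L adjoint (Sw S α)) =
          closure ((Submodule.span ℂ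
            {g : Lp ℂ 2 (haarAddCircle : Measure UnitAddCircle) |
              ∃ n : ℤ, n ≡ (∑ i : Fin k, ((α i : ℕ) : ℤ) * 2 ^ (i : ℕ)) [ZMOD (2 ^ k)] ∧
                g = fourierLp 2 n} : Submodule ℂ _) : Set _) := by
  have hS := apply_fourierBasis_of_ae_eq S hform0 hform1
  refine ⟨cuntzRep_of_apply_basis fourierBasis hS, fun k _ α => ?_⟩
  have hP := HilbertBasis.comp_adjoint_apply
    (Int.mul_add_injective (by positivity) _) (Sw_apply_of_apply_basis fourierBasis hS α)
  rw [fourierBasis.range_eq_closure_span_image hP, Int.range_mul_add, coe_fourierBasis]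
  congr
  ext g
  simp only [Nat.cast_ofNat, Set.mem_image, Set.mem_ofPred_eq, eq_comm]
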